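/- arXiv:1502.04876 — 6 statements merged into one kernel-verified Lean document; each statement's English description precedes it below -/
import Mathlib

section
/- Let F : ℝ² → SU(2) be a smooth map and write F⁻¹∂_x F = U_𝔨 + U_𝔭 and F⁻¹∂_y F = V_𝔨 + V_𝔭, where U_𝔨, V_𝔨 take values in 𝔨 = span{e₃} and U_𝔭, V_𝔭 take values in 𝔭 = span{e₁, e₂}. Define N := F e₃ F⁻¹. Then at every point, F⁻¹ (∂_x ∂_y N) F = [U_𝔭, [V_𝔭, e₃]] + [∂_x V_𝔭 + [U_𝔨, V_𝔭], e₃]. -/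
open Matrix

attribute [local instance] Matrix.normedAddCommGroup Matrix.normedSpace

noncomputable section

/-- The space of 2×2 complex matrices. -/
abbrev M2 : Type := Matrix (Fin 2) (Fin 2) ℂ

/-- Basis vector `e₁` of `su(2)`. -/
def e1 : M2 := (1 / 2 : ℂ) • !![0, Complex.I; Complex.I, 0]

/-- Basis vector `e₂` of `su(2)`. -/
def e2 : M2 := (1 / 2 : ℂ) • !![0, -1; 1, 0]

/-- Basis vector `e₃` of `su(2)`. -/
def e3 : M2 := (1 / 2 : ℂ) • !![Complex.I, 0; 0, -Complex.I]

/-- The Lie bracket `[X, Y] = XY - YX`. -/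
def br (X Y : M2) : M2 := X * Y - Y * X

/-- Partial derivative in the `x`-direction. -/
def pdx (g : ℝ × ℝ → M2) (p : ℝ × ℝ) : M2 := fderiv ℝ g p (1, 0)

/-- Partial derivative in the `y`-direction. -/
def pdy (g : ℝ × ℝ → M2) (p : ℝ × ℝ) : M2 := fderiv ℝ g p (0, 1)

def mulCLM : M2 →L[ℝ] M2 →L[ℝ] M2 :=
  LinearMap.toContinuousLinearMap
    ((LinearMap.toContinuousLinearMap : (M2 →ₗ[ℝ] M2) ≃ₗ[ℝ] (M2 →L[ℝ] M2)).toLinearMap.comp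
      (LinearMap.mul ℝ M2))

lemma mulCLM_apply (A B : M2) : mulCLM A B = A * B := rfl

lemma cmul {f g : ℝ × ℝ → M2} (hf : ContDiff ℝ (⊤ : ℕ∞) f) (hg : ContDiff ℝ (⊤ : ℕ∞) g) :
    ContDiff ℝ (⊤ : ℕ∞) fun q => f q * g q :=
  mulCLM.isBoundedBilinearMap.contDiff.comp (ContDiff.prodMk hf hg)

lemma dmul {f g : ℝ × ℝ → M2} (hf : Differentiable ℝ f) (hg : Differentiable ℝ g)
    (p v : ℝ × ℝ) :
    fderiv ℝ (fun q => f q * g q) p v = f p * fderiv ℝ g p v + fderiv ℝ f p v * g p := by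
  have h := mulCLM.fderiv_of_bilinear (hf p) (hg p)
  have he : (fun q => f q * g q) = fun q => mulCLM (f q) (g q) := rfl
  rw [he]; erw [h]
  exact rfl

def starCLM : M2 →L[ℝ] M2 :=
  LinearMap.toContinuousLinearMap
    { toFun := fun A => star A
      map_add' := fun A B => star_add A B
      map_smul' := fun r A => by
        ext i j
        simp [Matrix.star_apply, Matrix.smul_apply, star_smul] }

lemma starCLM_apply (A : M2) : starCLM A = star A := rfl

def PCLM : M2 →L[ℝ] M2 :=
  LinearMap.toContinuousLinearMap
    { toFun := fun A => (A 0 1 + A 1 0).im • e1 + (A 1 0 - A 0 1).re • e2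
      map_add' := fun A B => by
        simp only [Matrix.add_apply]
        simp only [Complex.add_im, Complex.add_re, Complex.sub_re]
        module
      map_smul' := fun r A => by
        simp only [Matrix.smul_apply, RingHom.id_apply, smul_add, smul_smul]
        rw [show ((r • A 0 1 + r • A 1 0).im) = r * (A 0 1 + A 1 0).im by
              simp [Complex.add_im, Complex.smul_im]; ring,
            show ((r • A 1 0 - r • A 0 1).re) = r * (A 1 0 - A 0 1).re by
              simp [Complex.sub_re, Complex.smul_re]; ring] }

lemma PCLM_apply (A : M2) : PCLM A = (A 0 1 + A 1 0).im • e1 + (A 1 0 - A 0 1).re • e2 := rfl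

lemma PCLM_e1 : PCLM e1 = e1 := by
  rw [PCLM_apply]; simp [e1, e2, Matrix.smul_apply]; norm_num

lemma PCLM_e2 : PCLM e2 = e2 := by
  rw [PCLM_apply]; simp [e1, e2, Matrix.smul_apply]; norm_num

lemma PCLM_e3 : PCLM e3 = 0 := by
  rw [PCLM_apply]; simp [e3, Matrix.smul_apply]

lemma PCLM_k {A : M2} (h : A ∈ Submodule.span ℝ ({e3} : Set M2)) : PCLM A = 0 := by
  obtain ⟨c, rfl⟩ := Submodule.mem_span_singleton.mp h
  rw [_root_.map_smul, PCLM_e3, smul_zero]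

lemma PCLM_p {A : M2} (h : A ∈ Submodule.span ℝ ({e1, e2} : Set M2)) : PCLM A = A := by
  obtain ⟨a, b, rfl⟩ := Submodule.mem_span_pair.mp h
  rw [map_add, _root_.map_smul, _root_.map_smul, PCLM_e1, PCLM_e2]

/-- for a smooth `F : ℝ² → SU(2)` with
`F⁻¹∂ₓF = U_𝔨 + U_𝔭`, `F⁻¹∂_yF = V_𝔨 + V_𝔭` and `N = F e₃ F⁻¹`, at every point
`F⁻¹ (∂ₓ∂_y N) F = [U_𝔭, [V_𝔭, e₃]] + [∂ₓV_𝔭 + [U_𝔨, V_𝔭], e₃]`. -/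
theorem statement1 (F : ℝ × ℝ → M2) (hF : ContDiff ℝ (⊤ : ℕ∞) F)
    (hFU : ∀ p, F p ∈ Matrix.specialUnitaryGroup (Fin 2) ℂ)
    (Uk Up Vk Vp : ℝ × ℝ → M2)
    (hUk : ∀ p, Uk p ∈ Submodule.span ℝ ({e3} : Set M2))
    (hVk : ∀ p, Vk p ∈ Submodule.span ℝ ({e3} : Set M2))
    (hUp : ∀ p, Up p ∈ Submodule.span ℝ ({e1, e2} : Set M2))
    (hVp : ∀ p, Vp p ∈ Submodule.span ℝ ({e1, e2} : Set M2))
    (hx : ∀ p, (F p)⁻¹ * pdx F p = Uk p + Up p)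
    (hy : ∀ p, (F p)⁻¹ * pdy F p = Vk p + Vp p)
    (N : ℝ × ℝ → M2) (hN : N = fun p => F p * e3 * (F p)⁻¹) :
    ∀ p, (F p)⁻¹ * pdx (pdy N) p * F p
      = br (Up p) (br (Vp p) e3) + br (pdx Vp p + br (Uk p) (Vp p)) e3 := by
  have h2 : ∀ p, F p * star (F p) = 1 := fun p =>
    Matrix.mem_unitaryGroup_iff.mp ((Matrix.mem_specialUnitaryGroup_iff.mp (hFU p)).1)
  have h1 : ∀ p, star (F p) * F p = 1 := fun p =>
    Matrix.mem_unitaryGroup_iff'.mp ((Matrix.mem_specialUnitaryGroup_iff.mp (hFU p)).1)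
  have hinv : ∀ p, (F p)⁻¹ = star (F p) := fun p => Matrix.inv_eq_right_inv (h2 p)
  have hGi : ContDiff ℝ (⊤ : ℕ∞) fun p => star (F p) := starCLM.contDiff.comp hF
  have hpdyF : ContDiff ℝ (⊤ : ℕ∞) fun p => fderiv ℝ F p (0, 1) :=
    (hF.fderiv_right (by simp)).clm_apply contDiff_const
  -- derivative of the inverse
  have hdGi : ∀ p v, fderiv ℝ (fun q => star (F q)) p v
      = -(star (F p) * fderiv ℝ F p v) * star (F p) := by
    intro p v
    have hconst : (fun q => star (F q) * F q) = fun _ => (1 : M2) := funext h1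
    have h := dmul (hGi.differentiable (by simp)) (hF.differentiable (by simp)) p v
    rw [hconst] at h
    simp only [fderiv_fun_const, Pi.zero_apply, ContinuousLinearMap.zero_apply] at h
    have h3 : fderiv ℝ (fun q => star (F q)) p v * F p
        = -(star (F p) * fderiv ℝ F p v) := by
      have := eq_neg_of_add_eq_zero_right h.symm
      rw [this]
    calc fderiv ℝ (fun q => star (F q)) p v
        = fderiv ℝ (fun q => star (F q)) p v * (F p * star (F p)) := by rw [h2 p, mul_one]
      _ = (fderiv ℝ (fun q => star (F q)) p v * F p) * star (F p) := by rw [mul_assoc]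
      _ = -(star (F p) * fderiv ℝ F p v) * star (F p) := by rw [h3]
  -- the structural relations
  have hdFx : ∀ p, fderiv ℝ F p (1, 0) = F p * (Uk p + Up p) := by
    intro p
    have hxp := hx p; rw [hinv p] at hxp
    calc fderiv ℝ F p (1, 0) = (F p * star (F p)) * fderiv ℝ F p (1, 0) := by
          rw [h2 p, one_mul]
      _ = F p * (star (F p) * pdx F p) := by rw [mul_assoc]; rfl
      _ = F p * (Uk p + Up p) := by rw [hxp]
  have hdFy : ∀ p, fderiv ℝ F p (0, 1) = F p * (Vk p + Vp p) := by
    intro p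
    have hyp := hy p; rw [hinv p] at hyp
    calc fderiv ℝ F p (0, 1) = (F p * star (F p)) * fderiv ℝ F p (0, 1) := by
          rw [h2 p, one_mul]
      _ = F p * (star (F p) * pdy F p) := by rw [mul_assoc]; rfl
      _ = F p * (Vk p + Vp p) := by rw [hyp]
  -- smoothness of Vp
  have hVpeq : Vp = fun p => PCLM (star (F p) * fderiv ℝ F p (0, 1)) := by
    funext p
    have hyp := hy p; rw [hinv p] at hyp
    have hyp' : star (F p) * fderiv ℝ F p (0, 1) = Vk p + Vp p := hyp
    rw [hyp', map_add, PCLM_k (hVk p), PCLM_p (hVp p), zero_add]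
  have hVps : ContDiff ℝ (⊤ : ℕ∞) Vp := by
    rw [hVpeq]
    exact PCLM.contDiff.comp (cmul hGi hpdyF)
  have hWs : ContDiff ℝ (⊤ : ℕ∞) fun q => Vp q * e3 - e3 * Vp q :=
    (cmul hVps contDiff_const).sub (cmul contDiff_const hVps)
  -- first derivative of N
  have key1 : pdy N = fun q => F q * (Vp q * e3 - e3 * Vp q) * star (F q) := by
    funext p
    have hN' : N = fun q => (F q * e3) * (fun q => star (F q)) q := by
      rw [hN]; funext q; rw [hinv q]
    show fderiv ℝ N p (0, 1) = _
    rw [hN', dmul ((cmul hF contDiff_const).differentiable (by simp))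
        (hGi.differentiable (by simp)),
      dmul (hF.differentiable (by simp)) (differentiable_const e3), hdGi, hdFy p]
    obtain ⟨cv, hcv⟩ := Submodule.mem_span_singleton.mp (hVk p)
    rw [← hcv]
    have h1a : ∀ X : M2, star (F p) * (F p * X) = X := fun X => by
      rw [← mul_assoc, h1 p, one_mul]
    simp only [fderiv_fun_const, Pi.zero_apply, ContinuousLinearMap.zero_apply, mul_zero,
      zero_mul, add_zero, zero_add, mul_assoc, mul_add, add_mul, mul_sub, sub_mul,
      neg_mul, mul_neg, smul_mul_assoc, mul_smul_comm, smul_add, smul_sub, h1a, h1 p, mul_one]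
    abel
  -- main computation
  intro p
  rw [hinv p, key1]
  obtain ⟨cu, hcu⟩ := Submodule.mem_span_singleton.mp (hUk p)
  have h1a : ∀ X : M2, star (F p) * (F p * X) = X := fun X => by
    rw [← mul_assoc, h1 p, one_mul]
  have hdW : fderiv ℝ (fun q => Vp q * e3 - e3 * Vp q) p (1, 0)
      = pdx Vp p * e3 - e3 * pdx Vp p := by
    erw [fderiv_fun_sub ((cmul hVps contDiff_const).differentiable (by simp) p)
        ((cmul contDiff_const hVps).differentiable (by simp) p)]
    show fderiv ℝ (fun q => Vp q * e3) p (1, 0) - fderiv ℝ (fun q => e3 * Vp q) p (1, 0) = _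
    erw [dmul (hVps.differentiable (by simp)) (differentiable_const _),
      dmul (differentiable_const _) (hVps.differentiable (by simp))]
    simp only [fderiv_fun_const, Pi.zero_apply, ContinuousLinearMap.zero_apply, mul_zero,
      zero_mul, add_zero, zero_add]
    rfl
  show star (F p) * fderiv ℝ
      (fun q => (fun q => F q * (Vp q * e3 - e3 * Vp q)) q * (fun q => star (F q)) q) p (1, 0)
      * F p = _
  rw [dmul ((cmul hF hWs).differentiable (by simp)) (hGi.differentiable (by simp)),
    dmul (hF.differentiable (by simp)) (hWs.differentiable (by simp)),
    hdGi, hdFx p, hdW, ← hcu]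
  simp only [br, mul_assoc, mul_add, add_mul, mul_sub, sub_mul, neg_mul, mul_neg,
    smul_mul_assoc, mul_smul_comm, smul_add, smul_sub, h1a, h1 p, mul_one]
  abel
end
end

section
/- Let U_𝔨, V_𝔨 : ℝ² → 𝔨 and U_𝔭, V_𝔭 : ℝ² → 𝔭 be C¹ maps, and for λ ∈ ℝ, λ ≠ 0, set U(λ) := U_𝔨 + λ U_𝔭 and V(λ) := V_𝔨 + λ⁻¹ V_𝔭. Assume the Maurer–Cartan equation holds at λ = 1, i.e. ∂_x V(1) − ∂_y U(1) + [U(1), V(1)] = 0 everywhere. Then the Maurer–Cartan equation ∂_x V(λ) − ∂_y U(λ) + [U(λ), V(λ)] = 0 holds everywhere for every λ ∈ ℝ \ {0} if and only if ∂_x V_𝔭 + [U_𝔨, V_𝔭] = 0 everywhere. -/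
open Matrix

attribute [local instance] Matrix.normedAddCommGroup Matrix.normedSpace

noncomputable section

/-- The loop-parameter family of connection coefficients:
`U(λ) = U_𝔨 + λ U_𝔭` and `V(λ) = V_𝔨 + λ⁻¹ V_𝔭`. -/
def Ulam (Uk Up : ℝ × ℝ → M2) (lam : ℝ) : ℝ × ℝ → M2 :=
  fun p => Uk p + (lam : ℂ) • Up p

def Vlam (Vk Vp : ℝ × ℝ → M2) (lam : ℝ) : ℝ × ℝ → M2 :=
  fun p => Vk p + ((lam : ℂ))⁻¹ • Vp p

/-- The Maurer–Cartan expression `∂ₓV(λ) − ∂_yU(λ) + [U(λ), V(λ)]` at `p`. -/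
def MC (Uk Up Vk Vp : ℝ × ℝ → M2) (lam : ℝ) (p : ℝ × ℝ) : M2 :=
  pdx (Vlam Vk Vp lam) p - pdy (Ulam Uk Up lam) p
    + br (Ulam Uk Up lam p) (Vlam Vk Vp lam p)

/-! Write `U(λ) = U_𝔨 + λ U_𝔭`, `V(λ) = V_𝔨 + λ⁻¹ V_𝔭` and expand: the Maurer–Cartan expression is
`A + λ⁻¹ B + λ C` with `A` independent of `λ`, `B = ∂ₓV_𝔭 + [U_𝔨, V_𝔭]` and `C = [U_𝔭, V_𝔨] − ∂_yU_𝔭`. The relations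
`[𝔨, 𝔨] ⊆ 𝔨`, `[𝔨, 𝔭] ⊆ 𝔭`, `[𝔭, 𝔭] ⊆ 𝔨`, and the fact that derivatives of `𝔨`- or `𝔭`-valued maps
stay in `𝔨` or `𝔭`, put `A` in `𝔨` and `B`, `C` in `𝔭`. Since `𝔨 ∩ 𝔭 = 0`, the equation at `λ = 1`
forces `A = 0` and `C = −B`, so the expression equals `(λ⁻¹ − λ) B`, which vanishes for every
`λ ≠ 0` iff `B = 0`. -/

open Filter Topology in
theorem fderiv_apply_mem_of_forall_mem {𝕜 E F : Type*} [NontriviallyNormedField 𝕜]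
    [NormedAddCommGroup E] [NormedSpace 𝕜 E] [NormedAddCommGroup F] [NormedSpace 𝕜 F]
    {S : Submodule 𝕜 F} (hS : IsClosed (S : Set F)) {f : E → F} (hf : ∀ x, f x ∈ S)
    (x v : E) : fderiv 𝕜 f x v ∈ S := by
  by_cases hfx : DifferentiableAt 𝕜 f x
  · refine hS.mem_of_tendsto (hfx.hasFDerivAt.lim v (c := id) tendsto_norm_cobounded_atTop)
      (Eventually.of_forall fun c => ?_)
    exact S.smul_mem _ (S.sub_mem (hf _) (hf _))
  · simp [fderiv_zero_of_not_differentiableAt hfx]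

def 𝔨 : Submodule ℝ M2 := Submodule.span ℝ {e3}

def 𝔭 : Submodule ℝ M2 := Submodule.span ℝ {e1, e2}

theorem br_e1_e2 : br e1 e2 = e3 := by
  ext i j; fin_cases i <;> fin_cases j <;> norm_num [br, e1, e2, e3] <;> ring_nf

theorem br_e2_e3 : br e2 e3 = e1 := by
  ext i j; fin_cases i <;> fin_cases j <;> norm_num [br, e1, e2, e3] <;> ring_nf

theorem br_e3_e1 : br e3 e1 = e2 := by
  ext i j; fin_cases i <;> fin_cases j <;> norm_num [br, e1, e2, e3] <;> ring_nf <;> norm_num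

theorem br_self (x : M2) : br x x = 0 := sub_self _

theorem br_swap (x y : M2) : br y x = -br x y := (neg_sub _ _).symm

theorem br_mem_of_mem_span {s t : Set M2} {S : Submodule ℝ M2}
    (h : ∀ a ∈ s, ∀ b ∈ t, br a b ∈ S) {x y : M2}
    (hx : x ∈ Submodule.span ℝ s) (hy : y ∈ Submodule.span ℝ t) : br x y ∈ S := by
  let brₗ : M2 →ₗ[ℝ] M2 →ₗ[ℝ] M2 := LinearMap.mul ℝ M2 - (LinearMap.mul ℝ M2).flip
  have hspan := Submodule.apply_mem_map₂ brₗ hx hy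
  rw [Submodule.map₂_span_span] at hspan
  exact Submodule.span_le.mpr (Set.image2_subset_iff.mpr h) hspan

theorem br_mem_𝔨_of_mem_𝔨 {x y : M2} (hx : x ∈ 𝔨) (hy : y ∈ 𝔨) : br x y ∈ 𝔨 :=
  br_mem_of_mem_span (by simp [br_self]) hx hy

theorem br_mem_𝔭_of_mem_𝔨 {x y : M2} (hx : x ∈ 𝔨) (hy : y ∈ 𝔭) : br x y ∈ 𝔭 := by
  refine br_mem_of_mem_span ?_ hx hy
  simp only [Set.mem_singleton_iff, Set.mem_insert_iff, forall_eq, forall_eq_or_imp]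
  rw [br_e3_e1, br_swap, br_e2_e3]
  exact ⟨Submodule.subset_span (by simp), neg_mem (Submodule.subset_span (by simp))⟩

theorem br_mem_𝔨_of_mem_𝔭 {x y : M2} (hx : x ∈ 𝔭) (hy : y ∈ 𝔭) : br x y ∈ 𝔨 := by
  refine br_mem_of_mem_span ?_ hx hy
  simp only [Set.mem_insert_iff, Set.mem_singleton_iff, forall_eq_or_imp, forall_eq]
  rw [br_e1_e2, br_swap e1 e2, br_e1_e2, br_self, br_self]
  have he3 : e3 ∈ 𝔨 := Submodule.mem_span_singleton_self e3
  exact ⟨⟨zero_mem _, he3⟩, neg_mem he3, zero_mem _⟩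

theorem eq_zero_of_mem_𝔨_of_mem_𝔭 {x : M2} (hk : x ∈ 𝔨) (hp : x ∈ 𝔭) : x = 0 := by
  obtain ⟨a, rfl⟩ := Submodule.mem_span_singleton.mp hk
  obtain ⟨b, c, h⟩ := Submodule.mem_span_pair.mp hp
  have ha : a = 0 := by simpa [e1, e2, e3] using (congrFun (congrFun h 0) 0).symm
  rw [ha, zero_smul]

theorem fderiv_add_smul_apply {f g : ℝ × ℝ → M2} {p : ℝ × ℝ} (hf : DifferentiableAt ℝ f p)
    (hg : DifferentiableAt ℝ g p) (c : ℂ) (v : ℝ × ℝ) :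
    fderiv ℝ (fun q => f q + c • g q) p v = fderiv ℝ f p v + c • fderiv ℝ g p v :=
  DFunLike.congr_fun (hf.hasFDerivAt.add (hg.hasFDerivAt.const_smul c)).fderiv v

theorem br_add_smul_add_inv_smul {a : ℂ} (ha : a ≠ 0) (X X' Y Y' : M2) :
    br (X + a • X') (Y + a⁻¹ • Y') = br X Y + br X' Y' + a⁻¹ • br X Y' + a • br X' Y := by
  simp only [br, add_mul, mul_add, smul_mul_assoc, mul_smul_comm, smul_add, smul_smul,
    mul_inv_cancel₀ ha, inv_mul_cancel₀ ha, one_smul, smul_sub]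
  abel

section LoopFamily

variable {Uk Up Vk Vp : ℝ × ℝ → M2}

theorem MC_eq_add_inv_smul_add_smul (hUk : Differentiable ℝ Uk) (hUp : Differentiable ℝ Up)
    (hVk : Differentiable ℝ Vk) (hVp : Differentiable ℝ Vp) {lam : ℝ} (hlam : lam ≠ 0)
    (p : ℝ × ℝ) :
    MC Uk Up Vk Vp lam p =
      (pdx Vk p - pdy Uk p + br (Uk p) (Vk p) + br (Up p) (Vp p))
        + (lam : ℂ)⁻¹ • (pdx Vp p + br (Uk p) (Vp p))
        + (lam : ℂ) • (br (Up p) (Vk p) - pdy Up p) := by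
  have hl : (lam : ℂ) ≠ 0 := Complex.ofReal_ne_zero.mpr hlam
  have hV : pdx (Vlam Vk Vp lam) p = pdx Vk p + (lam : ℂ)⁻¹ • pdx Vp p :=
    fderiv_add_smul_apply (hVk p) (hVp p) _ _
  have hU : pdy (Ulam Uk Up lam) p = pdy Uk p + (lam : ℂ) • pdy Up p :=
    fderiv_add_smul_apply (hUk p) (hUp p) _ _
  rw [MC, hV, hU]
  dsimp only [Ulam, Vlam]
  rw [br_add_smul_add_inv_smul hl]
  module

theorem MC_eq_smul_of_MC_one_eq_zero (hUk : Differentiable ℝ Uk) (hUp : Differentiable ℝ Up)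
    (hVk : Differentiable ℝ Vk) (hVp : Differentiable ℝ Vp) (hUk𝔨 : ∀ p, Uk p ∈ 𝔨)
    (hVk𝔨 : ∀ p, Vk p ∈ 𝔨) (hUp𝔭 : ∀ p, Up p ∈ 𝔭) (hVp𝔭 : ∀ p, Vp p ∈ 𝔭)
    (hMC1 : ∀ p, MC Uk Up Vk Vp 1 p = 0) (lam : ℝ) (hlam : lam ≠ 0) (p : ℝ × ℝ) :
    MC Uk Up Vk Vp lam p = ((lam : ℂ)⁻¹ - lam) • (pdx Vp p + br (Uk p) (Vp p)) := by
  have hMC1p := MC_eq_add_inv_smul_add_smul hUk hUp hVk hVp one_ne_zero p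
  rw [hMC1 p, Complex.ofReal_one, inv_one, one_smul, one_smul] at hMC1p
  rw [MC_eq_add_inv_smul_add_smul hUk hUp hVk hVp hlam p]
  have h𝔨 := Submodule.closed_of_finiteDimensional 𝔨
  have h𝔭 := Submodule.closed_of_finiteDimensional 𝔭
  set A := pdx Vk p - pdy Uk p + br (Uk p) (Vk p) + br (Up p) (Vp p)
  set B := pdx Vp p + br (Uk p) (Vp p)
  set C := br (Up p) (Vk p) - pdy Up p
  have hA : A ∈ 𝔨 := add_mem (add_mem (sub_mem (fderiv_apply_mem_of_forall_mem h𝔨 hVk𝔨 _ _)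
    (fderiv_apply_mem_of_forall_mem h𝔨 hUk𝔨 _ _)) (br_mem_𝔨_of_mem_𝔨 (hUk𝔨 p) (hVk𝔨 p)))
    (br_mem_𝔨_of_mem_𝔭 (hUp𝔭 p) (hVp𝔭 p))
  have hB : B ∈ 𝔭 :=
    add_mem (fderiv_apply_mem_of_forall_mem h𝔭 hVp𝔭 _ _) (br_mem_𝔭_of_mem_𝔨 (hUk𝔨 p) (hVp𝔭 p))
  have hC : C ∈ 𝔭 := by
    refine sub_mem ?_ (fderiv_apply_mem_of_forall_mem h𝔭 hUp𝔭 _ _)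
    rw [br_swap]
    exact neg_mem (br_mem_𝔭_of_mem_𝔨 (hVk𝔨 p) (hUp𝔭 p))
  have hABC : A + (B + C) = 0 := by rw [← add_assoc, hMC1p]
  have hA0 : A = 0 :=
    eq_zero_of_mem_𝔨_of_mem_𝔭 hA (eq_neg_of_add_eq_zero_left hABC ▸ neg_mem (add_mem hB hC))
  have hCB : C = -B := eq_neg_of_add_eq_zero_right (by simpa [hA0] using hABC)
  rw [hA0, hCB]
  module

end LoopFamily

/-- if the Maurer–Cartan equation holds at `λ = 1`, then it holds for all
real `λ ≠ 0` iff the Lorentz harmonic map equation `∂ₓV_𝔭 + [U_𝔨, V_𝔭] = 0` holds. -/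
theorem statement3 (Uk Vk Up Vp : ℝ × ℝ → M2)
    (hUkS : ContDiff ℝ 1 Uk) (hVkS : ContDiff ℝ 1 Vk)
    (hUpS : ContDiff ℝ 1 Up) (hVpS : ContDiff ℝ 1 Vp)
    (hUk : ∀ p, Uk p ∈ Submodule.span ℝ ({e3} : Set M2))
    (hVk : ∀ p, Vk p ∈ Submodule.span ℝ ({e3} : Set M2))
    (hUp : ∀ p, Up p ∈ Submodule.span ℝ ({e1, e2} : Set M2))
    (hVp : ∀ p, Vp p ∈ Submodule.span ℝ ({e1, e2} : Set M2))
    (hMC1 : ∀ p, MC Uk Up Vk Vp 1 p = 0) :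
    (∀ (lam : ℝ), lam ≠ 0 → ∀ p, MC Uk Up Vk Vp lam p = 0) ↔
      (∀ p, pdx Vp p + br (Uk p) (Vp p) = 0) := by
  have hMC := MC_eq_smul_of_MC_one_eq_zero (hUkS.differentiable one_ne_zero)
    (hUpS.differentiable one_ne_zero) (hVkS.differentiable one_ne_zero)
    (hVpS.differentiable one_ne_zero) hUk hVk hUp hVp hMC1
  constructor
  · intro h p
    have h2 := (hMC 2 two_ne_zero p).symm.trans (h 2 two_ne_zero p)
    exact (smul_eq_zero.mp h2).resolve_left (by norm_num)
  · intro h lam hlam p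
    rw [hMC lam hlam p, h p, smul_zero]
end
end

section
/- Let U_𝔨, V_𝔨 : ℝ² → 𝔨 and U_𝔭, V_𝔭 : ℝ² → 𝔭 be smooth maps, and let F : ℝ² × (ℝ \ {0}) → GL(2, ℂ) be a smooth map (jointly in the ℝ²-variables (x,y) and the parameter λ) such that F⁻¹ ∂_x F = U_𝔨 + λ U_𝔭 and F⁻¹ ∂_y F = V_𝔨 + λ⁻¹ V_𝔭, where U_𝔨, U_𝔭, V_𝔨, V_𝔭 do not depend on λ. Fix λ₀ ∈ ℝ \ {0} and define f : ℝ² → Matrix 2 2 ℂ by the Sym formula f := λ₀ · (∂_λ F)(·, λ₀) · F(·, λ₀)⁻¹, and set N := F(·,λ₀) e₃ F(·,λ₀)⁻¹. Then ∂_x f = λ₀ · F U_𝔭 F⁻¹ and ∂_y f = −λ₀⁻¹ · F V_𝔭 F⁻¹ (with F evaluated at λ₀); moreover ∂_x f = [N, ∂_x N] and ∂_y f = −[N, ∂_y N], i.e. f is the pseudospherical frontal associated to N. -/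
open Matrix

attribute [local instance] Matrix.normedAddCommGroup Matrix.normedSpace

noncomputable section

instance instNACGclm {E : Type*} [NormedAddCommGroup E] [NormedSpace ℝ E] :
    NormedAddCommGroup (E →L[ℝ] M2) :=
  { (ContinuousLinearMap.toNormedAddCommGroup : NormedAddCommGroup (E →L[ℝ] M2)) with
    toAddCommGroup := ContinuousLinearMap.addCommGroup }

instance instNSclm {E : Type*} [NormedAddCommGroup E] [NormedSpace ℝ E] :
    NormedSpace ℝ (E →L[ℝ] M2) :=
  { (ContinuousLinearMap.toNormedSpace : NormedSpace ℝ (E →L[ℝ] M2)) with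
    toModule := ContinuousLinearMap.module }

def mulL : M2 →L[ℝ] M2 →L[ℝ] M2 :=
  LinearMap.mkContinuous₂ (LinearMap.mul ℝ M2) 2 (by
    intro A B
    simp only [LinearMap.mul_apply']
    refine (Matrix.norm_le_iff (by positivity)).2 fun i j => ?_
    calc ‖(A * B) i j‖ = ‖∑ k, A i k * B k j‖ := by rw [Matrix.mul_apply]
    _ ≤ ∑ k, ‖A i k * B k j‖ := norm_sum_le _ _
    _ ≤ ∑ k : Fin 2, ‖A‖ * ‖B‖ := by
        refine Finset.sum_le_sum fun k _ => ?_
        rw [norm_mul]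
        exact mul_le_mul (Matrix.norm_entry_le_entrywise_sup_norm A)
          (Matrix.norm_entry_le_entrywise_sup_norm B) (norm_nonneg _) (norm_nonneg _)
    _ = 2 * ‖A‖ * ‖B‖ := by simp [Finset.sum_const]; ring)

@[simp] lemma mulL_apply (A B : M2) : mulL A B = A * B := rfl

def mulR : M2 →L[ℝ] M2 →L[ℝ] M2 := mulL.flip

@[simp] lemma mulR_apply (A B : M2) : mulR B A = A * B := rfl

lemma HasFDerivAt.matmul {E : Type*} [NormedAddCommGroup E] [NormedSpace ℝ E]
    {u v : E → M2} {u' v' : E →L[ℝ] M2} {x : E}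
    (hu : HasFDerivAt u u' x) (hv : HasFDerivAt v v' x) :
    HasFDerivAt (fun q => u q * v q)
      (@HAdd.hAdd (E →L[ℝ] M2) (E →L[ℝ] M2) (E →L[ℝ] M2) _ ((mulL (u x)).comp v') ((mulR (v x)).comp u')) x := by
  have h := (mulL.isBoundedBilinearMap.hasFDerivAt (u x, v x)).comp x (hu.prodMk hv)
  exact h

lemma HasDerivAt.matmul {u v : ℝ → M2} {u' v' : M2} {t : ℝ}
    (hu : HasDerivAt u u' t) (hv : HasDerivAt v v' t) :
    HasDerivAt (fun l => u l * v l) (u t * v' + u' * v t) t := by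
  have h := (mulL.isBoundedBilinearMap.hasFDerivAt (u t, v t)).comp_hasDerivAt t (hu.prodMk hv)
  exact h

def entryL (i j : Fin 2) : M2 →ₗ[ℝ] ℂ where
  toFun A := A i j
  map_add' _ _ := rfl
  map_smul' _ _ := rfl

lemma contDiff_entry (i j : Fin 2) : ContDiff ℝ (⊤ : ℕ∞) (fun A : M2 => A i j) :=
  (entryL i j).toContinuousLinearMap.contDiff

def adjL : M2 →ₗ[ℝ] M2 where
  toFun A := A.adjugate
  map_add' A B := by
    ext i j
    fin_cases i <;> fin_cases j <;>
      simp [Matrix.adjugate_fin_two] <;> ring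
  map_smul' c A := by
    ext i j
    fin_cases i <;> fin_cases j <;>
      simp [Matrix.adjugate_fin_two]

def scL : ℂ →ₗ[ℝ] M2 where
  toFun c := c • (1 : M2)
  map_add' a b := add_smul a b 1
  map_smul' c a := by
    simp only [RingHom.id_apply]
    rw [show ((c:ℝ) • a) • (1:M2) = ((c:ℂ) * a) • (1:M2) by norm_cast,
      mul_smul]
    norm_cast

lemma ContDiffAt.matmul {E : Type*} [NormedAddCommGroup E] [NormedSpace ℝ E]
    {f g : E → M2} {x : E} (hf : ContDiffAt ℝ (⊤ : ℕ∞) f x) (hg : ContDiffAt ℝ (⊤ : ℕ∞) g x) :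
    ContDiffAt ℝ (⊤ : ℕ∞) (fun q => f q * g q) x :=
  mulL.isBoundedBilinearMap.contDiff.comp₂_contDiffAt (g := fun p => mulL p.1 p.2) hf hg

lemma contDiff_det : ContDiff ℝ (⊤ : ℕ∞) (fun A : M2 => A.det) := by
  have : (fun A : M2 => A.det) = fun A : M2 => A 0 0 * A 1 1 - A 0 1 * A 1 0 := by
    funext A; exact Matrix.det_fin_two A
  rw [this]
  exact ((contDiff_entry 0 0).mul (contDiff_entry 1 1)).sub
    ((contDiff_entry 0 1).mul (contDiff_entry 1 0))

lemma contDiffAt_inv_matrix {A : M2} (hA : IsUnit A) :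
    ContDiffAt ℝ (⊤ : ℕ∞) (fun B : M2 => B⁻¹) A := by
  have hdet : A.det ≠ 0 := ((Matrix.isUnit_iff_isUnit_det A).1 hA).ne_zero
  have heq : (fun B : M2 => B⁻¹) =ᶠ[nhds A] fun B : M2 => (B.det)⁻¹ • B.adjugate := by
    have hopen : IsOpen {B : M2 | B.det ≠ 0} :=
      isOpen_ne_fun contDiff_det.continuous continuous_const
    filter_upwards [hopen.mem_nhds hdet] with B hB
    rw [Matrix.inv_def, Ring.inverse_eq_inv']
  refine ContDiffAt.congr_of_eventuallyEq ?_ heq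
  have h1 : ContDiffAt ℝ (⊤ : ℕ∞) (fun B : M2 => scL ((B.det)⁻¹)) A :=
    scL.toContinuousLinearMap.contDiff.contDiffAt.comp A
      (contDiff_det.contDiffAt.inv hdet)
  have h2 : ContDiffAt ℝ (⊤ : ℕ∞) (fun B : M2 => B.adjugate) A :=
    adjL.toContinuousLinearMap.contDiff.contDiffAt
  have := h1.matmul h2
  refine this.congr_of_eventuallyEq (Filter.Eventually.of_forall fun B => ?_)
  show (B.det)⁻¹ • B.adjugate = ((B.det)⁻¹ • (1:M2)) * B.adjugate
  rw [smul_mul_assoc, one_mul]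

/-- The core analytic computation: derivative of the Sym formula and of `N`
in a fixed direction `w0`. -/
lemma sym_aux (F : (ℝ × ℝ) × ℝ → M2)
    (hFsm : ContDiffOn ℝ (⊤ : ℕ∞) F {q : (ℝ × ℝ) × ℝ | q.2 ≠ 0})
    (hFinv : ∀ q : (ℝ × ℝ) × ℝ, q.2 ≠ 0 → IsUnit (F q))
    (lam0 : ℝ) (hlam0 : lam0 ≠ 0) (p : ℝ × ℝ) (w0 : ℝ × ℝ)
    (C : (ℝ × ℝ) → ℝ → M2) (C' : M2)
    (hC : HasDerivAt (C p) C' lam0)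
    (hCD : ∀ (q : ℝ × ℝ) (l : ℝ), l ≠ 0 → fderiv ℝ F (q, l) (w0, 0) = F (q, l) * C q l) :
    fderiv ℝ (fun q => (lam0 : ℂ) • (deriv (fun l : ℝ => F (q, l)) lam0 * (F (q, lam0))⁻¹)) p w0
      = (lam0 : ℂ) • (F (p, lam0) * C' * (F (p, lam0))⁻¹) ∧
    fderiv ℝ (fun q => F (q, lam0) * e3 * (F (q, lam0))⁻¹) p w0
      = F (p, lam0) * (C p lam0 * e3 - e3 * C p lam0) * (F (p, lam0))⁻¹ := by
  have hSo : IsOpen {q : (ℝ × ℝ) × ℝ | q.2 ≠ 0} :=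
    isOpen_ne_fun continuous_snd continuous_const
  -- basic differentiability of F
  have hFAt : ∀ {q : (ℝ × ℝ) × ℝ}, q.2 ≠ 0 → HasFDerivAt F (fderiv ℝ F q) q := by
    intro q hq
    exact (((hFsm.contDiffAt (hSo.mem_nhds hq)).differentiableAt (by simp)).hasFDerivAt)
  -- the inclusion q ↦ (q, lam0)
  set J : (ℝ × ℝ) →L[ℝ] (ℝ × ℝ) × ℝ :=
    (ContinuousLinearMap.id ℝ (ℝ × ℝ)).prod (0 : (ℝ × ℝ) →L[ℝ] ℝ) with hJdef
  have hJap : ∀ w : ℝ × ℝ, J w = (w, 0) := fun w => rfl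
  have hJ : ∀ q : ℝ × ℝ, HasFDerivAt (fun q : ℝ × ℝ => ((q, lam0) : (ℝ × ℝ) × ℝ)) J q :=
    fun q => (hasFDerivAt_id q).prodMk (hasFDerivAt_const lam0 q)
  have hGq : ∀ q : ℝ × ℝ, HasFDerivAt (fun q : ℝ × ℝ => F (q, lam0))
      ((fderiv ℝ F (q, lam0)).comp J) q :=
    fun q => (hFAt hlam0).comp q (hJ q)
  -- units
  have hU : ∀ q : ℝ × ℝ, IsUnit (F (q, lam0)).det :=
    fun q => (Matrix.isUnit_iff_isUnit_det _).1 (hFinv (q, lam0) hlam0)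
  have hGiG : ∀ q : ℝ × ℝ, (F (q, lam0))⁻¹ * F (q, lam0) = 1 :=
    fun q => Matrix.nonsing_inv_mul _ (hU q)
  have hGGi : ∀ q : ℝ × ℝ, F (q, lam0) * (F (q, lam0))⁻¹ = 1 :=
    fun q => Matrix.mul_nonsing_inv _ (hU q)
  -- smoothness and derivative of the inverse
  have hGsm : ∀ q : ℝ × ℝ, ContDiffAt ℝ (⊤ : ℕ∞) (fun q : ℝ × ℝ => F (q, lam0)) q := by
    intro q
    exact (hFsm.contDiffAt (hSo.mem_nhds hlam0)).comp q
      (contDiffAt_id.prodMk contDiffAt_const)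
  have hGism : ∀ q : ℝ × ℝ, ContDiffAt ℝ (⊤ : ℕ∞) (fun q : ℝ × ℝ => (F (q, lam0))⁻¹) q :=
    fun q => (contDiffAt_inv_matrix (hFinv (q, lam0) hlam0)).comp q (hGsm q)
  have hGiF : HasFDerivAt (fun q : ℝ × ℝ => (F (q, lam0))⁻¹)
      (fderiv ℝ (fun q : ℝ × ℝ => (F (q, lam0))⁻¹) p) p :=
    ((hGism p).differentiableAt (by simp)).hasFDerivAt
  set DGi := fderiv ℝ (fun q : ℝ × ℝ => (F (q, lam0))⁻¹) p with hDGidef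
  set g := F (p, lam0) with hgdef
  set gi := (F (p, lam0))⁻¹ with hgidef
  have hgig : ∀ Z : M2, gi * (g * Z) = Z := fun Z => by
    rw [← mul_assoc, hGiG, one_mul]
  have hggi : ∀ Z : M2, g * (gi * Z) = Z := fun Z => by
    rw [← mul_assoc, hGGi, one_mul]
  have hDGi : ∀ w : ℝ × ℝ, DGi w = -(gi * (fderiv ℝ F (p, lam0) (w, 0)) * gi) := by
    intro w
    have h1 := hGiF.matmul (hGq p)
    have h0 : HasFDerivAt (fun _ : ℝ × ℝ => (1 : M2)) (0 : (ℝ × ℝ) →L[ℝ] M2) p := hasFDerivAt_const 1 p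
    have heq : (fun q : ℝ × ℝ => (F (q, lam0))⁻¹ * F (q, lam0)) = fun _ : ℝ × ℝ => (1 : M2) :=
      funext fun q => hGiG q
    rw [heq] at h1
    have h2 := h1.unique h0
    have h3 : gi * (fderiv ℝ F (p, lam0) (J w)) + DGi w * g = 0 := by
      have := congrFun (congrArg (fun L : (ℝ × ℝ) →L[ℝ] M2 => (L : (ℝ × ℝ) → M2)) h2) w
      simpa [hDGidef] using this
    have h4 : DGi w * g = -(gi * (fderiv ℝ F (p, lam0) (w, 0))) := by
      rw [hJap] at h3; linear_combination (norm := module) h3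
    calc DGi w = DGi w * (g * gi) := by rw [hGGi]; rw [mul_one]
    _ = (DGi w * g) * gi := by rw [mul_assoc]
    _ = -(gi * (fderiv ℝ F (p, lam0) (w, 0)) * gi) := by rw [h4]; ring_nf; rw [neg_mul]
  -- derivative in λ
  have hlamD : ∀ (q : ℝ × ℝ) (l : ℝ), l ≠ 0 →
      HasDerivAt (fun l' : ℝ => F (q, l')) (fderiv ℝ F (q, l) (0, 1)) l := by
    intro q l hl
    have hpair : HasDerivAt (fun l' : ℝ => ((q, l') : (ℝ × ℝ) × ℝ)) (0, 1) l :=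
      (hasDerivAt_const l q).prodMk (hasDerivAt_id l)
    exact (hFAt hl).comp_hasDerivAt l hpair
  have hderiv_eq : ∀ q : ℝ × ℝ,
      deriv (fun l : ℝ => F (q, l)) lam0 = fderiv ℝ F (q, lam0) (0, 1) :=
    fun q => (hlamD q lam0 hlam0).deriv
  -- second derivative
  have hD2 : HasFDerivAt (fderiv ℝ F) (fderiv ℝ (fderiv ℝ F) (p, lam0)) (p, lam0) := by
    have hDsm : ContDiffOn ℝ 1 (fderiv ℝ F) {q : (ℝ × ℝ) × ℝ | q.2 ≠ 0} :=
      hFsm.fderiv_of_isOpen hSo (WithTop.coe_le_coe.2 le_top)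
    exact ((hDsm.contDiffAt (hSo.mem_nhds hlam0)).differentiableAt one_ne_zero).hasFDerivAt
  set D2 := fderiv ℝ (fderiv ℝ F) (p, lam0) with hD2def
  have hsym : ∀ v w, D2 v w = D2 w v :=
    (hFsm.contDiffAt (hSo.mem_nhds hlam0)).isSymmSndFDerivAt (by rw [minSmoothness_of_isRCLikeNormedField]; exact WithTop.coe_le_coe.2 (le_top : (2 : ℕ∞) ≤ ⊤))
  -- mixed partial computation
  have hmix : D2 ((0 : ℝ × ℝ), (1 : ℝ)) (w0, 0) = g * C' + fderiv ℝ F (p, lam0) (0, 1) * C p lam0 := by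
    have hφ : HasDerivAt (fun l : ℝ => fderiv ℝ F (p, l) (w0, 0))
        (D2 (0, 1) (w0, 0)) lam0 := by
      have hpair : HasDerivAt (fun l' : ℝ => ((p, l') : (ℝ × ℝ) × ℝ)) (0, 1) lam0 :=
        (hasDerivAt_const lam0 p).prodMk (hasDerivAt_id lam0)
      have h1 : HasDerivAt (fun l : ℝ => fderiv ℝ F (p, l)) (D2 (0, 1)) lam0 :=
        hD2.comp_hasDerivAt lam0 hpair
      exact (ContinuousLinearMap.apply ℝ M2 ((w0, 0) : (ℝ × ℝ) × ℝ)).hasFDerivAt.comp_hasDerivAt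
        lam0 h1
    have hψ : HasDerivAt (fun l : ℝ => F (p, l) * C p l)
        (g * C' + fderiv ℝ F (p, lam0) (0, 1) * C p lam0) lam0 :=
      (hlamD p lam0 hlam0).matmul hC
    have hev : (fun l : ℝ => fderiv ℝ F (p, l) (w0, 0)) =ᶠ[nhds lam0]
        (fun l : ℝ => F (p, l) * C p l) := by
      filter_upwards [isOpen_ne.mem_nhds hlam0] with l hl
      exact hCD p l hl
    exact hφ.unique (hψ.congr_of_eventuallyEq hev)
  have hDG : fderiv ℝ F (p, lam0) (w0, 0) = g * C p lam0 := hCD p lam0 hlam0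
  constructor
  · -- Sym formula part
    have hfeq : (fun q : ℝ × ℝ =>
          (lam0 : ℂ) • (deriv (fun l : ℝ => F (q, l)) lam0 * (F (q, lam0))⁻¹))
        = fun q : ℝ × ℝ =>
          (lam0 : ℂ) • (fderiv ℝ F (q, lam0) ((0 : ℝ × ℝ), (1 : ℝ)) * (F (q, lam0))⁻¹) :=
      funext fun q => by rw [hderiv_eq q]
    have hΦ : HasFDerivAt (fun q : ℝ × ℝ => fderiv ℝ F (q, lam0))
        (D2.comp J) p := hD2.comp p (hJ p)
    have hΦv : HasFDerivAt (fun q : ℝ × ℝ => fderiv ℝ F (q, lam0) ((0 : ℝ × ℝ), (1 : ℝ)))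
        ((ContinuousLinearMap.apply ℝ M2 (((0 : ℝ × ℝ), (1 : ℝ)) : (ℝ × ℝ) × ℝ)).comp
          (D2.comp J)) p :=
      (ContinuousLinearMap.apply ℝ M2
        (((0 : ℝ × ℝ), (1 : ℝ)) : (ℝ × ℝ) × ℝ)).hasFDerivAt.comp p hΦ
    have hfF := (hΦv.matmul hGiF).const_smul (lam0 : ℂ)
    have hfF' : HasFDerivAt (fun q : ℝ × ℝ =>
        (lam0 : ℂ) • (fderiv ℝ F (q, lam0) ((0 : ℝ × ℝ), (1 : ℝ)) * (F (q, lam0))⁻¹)) _ p := hfF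
    rw [hfeq, hfF'.fderiv]
    show (lam0 : ℂ) • (fderiv ℝ F (p, lam0) ((0 : ℝ × ℝ), (1 : ℝ)) * DGi w0
      + D2 (J w0) ((0 : ℝ × ℝ), (1 : ℝ)) * gi) = _
    rw [hJap, hDGi, hDG]
    rw [show D2 (w0, 0) ((0 : ℝ × ℝ), (1 : ℝ)) = g * C' + fderiv ℝ F (p, lam0) (0, 1) * C p lam0
      from (hsym _ _).trans hmix]
    congr 1
    simp only [mul_assoc, hgig, mul_neg, neg_mul, add_mul]
    abel
  · -- N part
    have hNe : HasFDerivAt (fun q : ℝ × ℝ => F (q, lam0) * e3)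
        (@HAdd.hAdd ((ℝ × ℝ) →L[ℝ] M2) ((ℝ × ℝ) →L[ℝ] M2) ((ℝ × ℝ) →L[ℝ] M2) _
          ((mulL (F (p, lam0))).comp (0 : (ℝ × ℝ) →L[ℝ] M2))
          ((mulR e3).comp ((fderiv ℝ F (p, lam0)).comp J))) p :=
      (hGq p).matmul (hasFDerivAt_const e3 p)
    have hNN := hNe.matmul hGiF
    rw [hNN.fderiv]
    simp only [ContinuousLinearMap.add_apply, ContinuousLinearMap.comp_apply,
      ContinuousLinearMap.flip_apply, ContinuousLinearMap.zero_apply, mulL_apply, mulR_apply,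
      mul_zero, zero_add]
    rw [hJap, hDGi, hDG]
    simp only [mul_assoc, hgig, mul_neg, neg_mul, mul_sub, sub_mul, mul_zero, zero_add]
    abel

lemma I_cube : Complex.I ^ 3 = -Complex.I := by
  rw [pow_succ, Complex.I_sq]; ring

lemma key_bracket {K X : M2} (hK : K ∈ Submodule.span ℝ ({e3} : Set M2))
    (hX : X ∈ Submodule.span ℝ ({e1, e2} : Set M2)) (c : ℂ) :
    e3 * ((K + c • X) * e3 - e3 * (K + c • X))
      - ((K + c • X) * e3 - e3 * (K + c • X)) * e3 = c • X := by
  obtain ⟨u, hu⟩ := Submodule.mem_span_singleton.1 hK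
  obtain ⟨a, b, hab⟩ := Submodule.mem_span_pair.1 hX
  subst hu; rw [← hab]
  ext i j
  fin_cases i <;> fin_cases j <;>
    simp [e1, e2, e3, Matrix.mul_apply, Fin.sum_univ_two, Complex.real_smul]
  all_goals ring_nf
  all_goals simp only [I_cube, Complex.I_sq]
  all_goals ring


/-- the Sym formula. For an extended frame
`F : ℝ² × (ℝ \ {0}) → GL(2,ℂ)` with `F⁻¹∂ₓF = U_𝔨 + λU_𝔭`, `F⁻¹∂_yF = V_𝔨 + λ⁻¹V_𝔭`,
and `f := λ₀ (∂_λ F) F⁻¹`, `N := F e₃ F⁻¹` at `λ = λ₀`, one has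
`∂ₓ f = λ₀ F U_𝔭 F⁻¹`, `∂_y f = −λ₀⁻¹ F V_𝔭 F⁻¹`, and
`∂ₓ f = [N, ∂ₓN]`, `∂_y f = −[N, ∂_y N]`. -/
theorem statement4 (F : (ℝ × ℝ) × ℝ → M2)
    (hFsm : ContDiffOn ℝ (⊤ : ℕ∞) F {q : (ℝ × ℝ) × ℝ | q.2 ≠ 0})
    (hFinv : ∀ q : (ℝ × ℝ) × ℝ, q.2 ≠ 0 → IsUnit (F q))
    (Uk Up Vk Vp : ℝ × ℝ → M2)
    (hUkS : ContDiff ℝ (⊤ : ℕ∞) Uk) (hUpS : ContDiff ℝ (⊤ : ℕ∞) Up)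
    (hVkS : ContDiff ℝ (⊤ : ℕ∞) Vk) (hVpS : ContDiff ℝ (⊤ : ℕ∞) Vp)
    (hUk : ∀ p, Uk p ∈ Submodule.span ℝ ({e3} : Set M2))
    (hVk : ∀ p, Vk p ∈ Submodule.span ℝ ({e3} : Set M2))
    (hUp : ∀ p, Up p ∈ Submodule.span ℝ ({e1, e2} : Set M2))
    (hVp : ∀ p, Vp p ∈ Submodule.span ℝ ({e1, e2} : Set M2))
    (hx : ∀ (p : ℝ × ℝ) (lam : ℝ), lam ≠ 0 →
      (F (p, lam))⁻¹ * fderiv ℝ (fun p' => F (p', lam)) p (1, 0)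
        = Uk p + (lam : ℂ) • Up p)
    (hy : ∀ (p : ℝ × ℝ) (lam : ℝ), lam ≠ 0 →
      (F (p, lam))⁻¹ * fderiv ℝ (fun p' => F (p', lam)) p (0, 1)
        = Vk p + ((lam : ℂ))⁻¹ • Vp p)
    (lam0 : ℝ) (hlam0 : lam0 ≠ 0)
    (f N : ℝ × ℝ → M2)
    (hf : f = fun p => (lam0 : ℂ) • (deriv (fun l : ℝ => F (p, l)) lam0 * (F (p, lam0))⁻¹))
    (hN : N = fun p => F (p, lam0) * e3 * (F (p, lam0))⁻¹) :
    ∀ p : ℝ × ℝ,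
      pdx f p = (lam0 : ℂ) • (F (p, lam0) * Up p * (F (p, lam0))⁻¹) ∧
      pdy f p = -(((lam0 : ℂ))⁻¹ • (F (p, lam0) * Vp p * (F (p, lam0))⁻¹)) ∧
      pdx f p = br (N p) (pdx N p) ∧
      pdy f p = -br (N p) (pdy N p) := by
  intro p
  have hSo : IsOpen {q : (ℝ × ℝ) × ℝ | q.2 ≠ 0} :=
    isOpen_ne_fun continuous_snd continuous_const
  have hFAt : ∀ {q : (ℝ × ℝ) × ℝ}, q.2 ≠ 0 → HasFDerivAt F (fderiv ℝ F q) q := by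
    intro q hq
    exact (((hFsm.contDiffAt (hSo.mem_nhds hq)).differentiableAt (by simp)).hasFDerivAt)
  -- slice derivatives
  have hslice : ∀ (q : ℝ × ℝ) (l : ℝ), l ≠ 0 → ∀ w : ℝ × ℝ,
      fderiv ℝ (fun p' : ℝ × ℝ => F (p', l)) q w = fderiv ℝ F (q, l) (w, 0) := by
    intro q l hl w
    have hJ : HasFDerivAt (fun q : ℝ × ℝ => ((q, l) : (ℝ × ℝ) × ℝ))
        ((ContinuousLinearMap.id ℝ (ℝ × ℝ)).prod (0 : (ℝ × ℝ) →L[ℝ] ℝ)) q :=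
      (hasFDerivAt_id q).prodMk (hasFDerivAt_const l q)
    have h2 : HasFDerivAt (fun p' : ℝ × ℝ => F (p', l))
        ((fderiv ℝ F (q, l)).comp ((ContinuousLinearMap.id ℝ (ℝ × ℝ)).prod 0)) q :=
      (hFAt hl).comp q hJ
    rw [h2.fderiv]
    rfl
  have hunit : ∀ (q : ℝ × ℝ) (l : ℝ), l ≠ 0 → IsUnit (F (q, l)).det :=
    fun q l hl => (Matrix.isUnit_iff_isUnit_det _).1 (hFinv (q, l) hl)
  have hCx : ∀ (q : ℝ × ℝ) (l : ℝ), l ≠ 0 →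
      fderiv ℝ F (q, l) (((1 : ℝ), (0 : ℝ)), 0) = F (q, l) * (Uk q + (l : ℂ) • Up q) := by
    intro q l hl
    rw [← hx q l hl, ← mul_assoc, Matrix.mul_nonsing_inv _ (hunit q l hl), one_mul,
      hslice q l hl]
  have hCy : ∀ (q : ℝ × ℝ) (l : ℝ), l ≠ 0 →
      fderiv ℝ F (q, l) (((0 : ℝ), (1 : ℝ)), 0) = F (q, l) * (Vk q + ((l : ℂ))⁻¹ • Vp q) := by
    intro q l hl
    rw [← hy q l hl, ← mul_assoc, Matrix.mul_nonsing_inv _ (hunit q l hl), one_mul,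
      hslice q l hl]
  -- derivative of the coefficient functions in λ
  have hCder_x : HasDerivAt (fun l : ℝ => Uk p + (l : ℂ) • Up p) (Up p) lam0 := by
    have : (fun l : ℝ => Uk p + (l : ℂ) • Up p) = fun l : ℝ => Uk p + l • Up p :=
      funext fun l => by rw [Complex.coe_smul]
    rw [this]
    exact ((hasDerivAt_const lam0 (Uk p)).add ((hasDerivAt_id lam0).smul_const (Up p))).congr_deriv (by simp)
  have hCder_y : HasDerivAt (fun l : ℝ => Vk p + ((l : ℂ))⁻¹ • Vp p)
      ((-(lam0 ^ 2)⁻¹ : ℝ) • Vp p) lam0 := by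
    have : (fun l : ℝ => Vk p + ((l : ℂ))⁻¹ • Vp p) = fun l : ℝ => Vk p + l⁻¹ • Vp p :=
      funext fun l => by rw [← Complex.ofReal_inv, Complex.coe_smul]
    rw [this]
    exact ((hasDerivAt_const lam0 (Vk p)).add ((hasDerivAt_inv hlam0).smul_const (Vp p))).congr_deriv (by simp)
  -- apply the main computation
  have hax := sym_aux F hFsm hFinv lam0 hlam0 p (1, 0)
    (fun q l => Uk q + (l : ℂ) • Up q) (Up p) hCder_x (fun q l hl => hCx q l hl)
  have hay := sym_aux F hFsm hFinv lam0 hlam0 p (0, 1)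
    (fun q l => Vk q + ((l : ℂ))⁻¹ • Vp q) ((-(lam0 ^ 2)⁻¹ : ℝ) • Vp p) hCder_y
    (fun q l hl => hCy q l hl)
  subst hf hN
  set g := F (p, lam0) with hgdef
  set gi := (F (p, lam0))⁻¹ with hgidef
  have hgig : ∀ Z : M2, gi * (g * Z) = Z := fun Z => by
    rw [← mul_assoc, Matrix.nonsing_inv_mul _ (hunit p lam0 hlam0), one_mul]
  -- the four statements
  have goal1 : pdx (fun p : ℝ × ℝ =>
      (lam0 : ℂ) • (deriv (fun l : ℝ => F (p, l)) lam0 * (F (p, lam0))⁻¹)) p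
      = (lam0 : ℂ) • (g * Up p * gi) := hax.1
  have goal2 : pdy (fun p : ℝ × ℝ =>
      (lam0 : ℂ) • (deriv (fun l : ℝ => F (p, l)) lam0 * (F (p, lam0))⁻¹)) p
      = -(((lam0 : ℂ))⁻¹ • (g * Vp p * gi)) := by
    have h := hay.1
    rw [pdy, h]
    rw [mul_smul_comm, smul_mul_assoc, ← Complex.coe_smul, smul_smul, ← neg_smul]
    congr 1
    have hl0c : (lam0 : ℂ) ≠ 0 := Complex.ofReal_ne_zero.2 hlam0
    push_cast
    field_simp
  have hNx : pdx (fun p : ℝ × ℝ => F (p, lam0) * e3 * (F (p, lam0))⁻¹) p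
      = g * ((Uk p + (lam0 : ℂ) • Up p) * e3 - e3 * (Uk p + (lam0 : ℂ) • Up p)) * gi :=
    hax.2
  have hNy : pdy (fun p : ℝ × ℝ => F (p, lam0) * e3 * (F (p, lam0))⁻¹) p
      = g * ((Vk p + ((lam0 : ℂ))⁻¹ • Vp p) * e3 - e3 * (Vk p + ((lam0 : ℂ))⁻¹ • Vp p)) * gi :=
    hay.2
  have hbr : ∀ W : M2, br (g * e3 * gi) (g * W * gi) = g * (e3 * W - W * e3) * gi := by
    intro W
    rw [br]
    simp only [mul_assoc, hgig, mul_sub, sub_mul]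
  refine ⟨goal1, goal2, ?_, ?_⟩
  · rw [goal1, hNx, hbr]
    rw [key_bracket (hUk p) (hUp p) (lam0 : ℂ)]
    rw [mul_smul_comm, smul_mul_assoc]
  · rw [goal2, hNy, hbr]
    rw [key_bracket (hVk p) (hVp p) ((lam0 : ℂ))⁻¹]
    rw [mul_smul_comm, smul_mul_assoc]
end
end

section
/- Let F : ℝ² → SU(2) be smooth with F⁻¹∂_x F = U_𝔨 + U_𝔭 and F⁻¹∂_y F = V_𝔨 + V_𝔭 (𝔨- and 𝔭-components as indicated), and write U_𝔭 = u₁e₁ + u₂e₂, V_𝔭 = v₁e₁ + v₂e₂ for real-valued functions u₁, u₂, v₁, v₂. Let f : ℝ² → su(2) be a C¹ map with ∂_x f = F U_𝔭 F⁻¹ and ∂_y f = −F V_𝔭 F⁻¹, and set N := F e₃ F⁻¹. Then at every point, [∂_x f, ∂_y f] = −(u₁v₂ − u₂v₁) · N. Consequently, for each point p, the differential of f at p has rank 2 (f is immersed at p) if and only if U_𝔭(p) and V_𝔭(p) are linearly independent. -/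
open Matrix

attribute [local instance] Matrix.normedAddCommGroup Matrix.normedSpace

noncomputable section

lemma key12 : e1 * e2 - e2 * e1 = e3 := by
  simp only [e1, e2, e3]
  ext i j
  fin_cases i <;> fin_cases j <;> simp [Matrix.mul_apply, Fin.sum_univ_two] <;> ring

lemma br_p (a b c d : ℝ) :
    br (a • e1 + b • e2) (c • e1 + d • e2) = (a * d - b * c) • e3 := by
  rw [← key12]
  simp only [br, add_mul, mul_add, smul_mul_assoc, mul_smul_comm, smul_smul]
  module

/-- `[∂ₓf, ∂_y f] = −(u₁v₂ − u₂v₁) N` (i.e. `f_x × f_y = −(u₁v₂−u₂v₁) N`),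
and `f` is immersed at `p` iff `U_𝔭(p)`, `V_𝔭(p)` are linearly independent. -/
theorem statement5 (F : ℝ × ℝ → M2) (hF : ContDiff ℝ (⊤ : ℕ∞) F)
    (hFU : ∀ p, F p ∈ Matrix.specialUnitaryGroup (Fin 2) ℂ)
    (Uk Vk Up Vp : ℝ × ℝ → M2)
    (u1 u2 v1 v2 : ℝ × ℝ → ℝ)
    (hUk : ∀ p, Uk p ∈ Submodule.span ℝ ({e3} : Set M2))
    (hVk : ∀ p, Vk p ∈ Submodule.span ℝ ({e3} : Set M2))
    (hUpdef : ∀ p, Up p = u1 p • e1 + u2 p • e2)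
    (hVpdef : ∀ p, Vp p = v1 p • e1 + v2 p • e2)
    (hx : ∀ p, (F p)⁻¹ * pdx F p = Uk p + Up p)
    (hy : ∀ p, (F p)⁻¹ * pdy F p = Vk p + Vp p)
    (f : ℝ × ℝ → M2) (hfC1 : ContDiff ℝ 1 f)
    (hfx : ∀ p, pdx f p = F p * Up p * (F p)⁻¹)
    (hfy : ∀ p, pdy f p = -(F p * Vp p * (F p)⁻¹))
    (N : ℝ × ℝ → M2) (hN : N = fun p => F p * e3 * (F p)⁻¹) :
    (∀ p, br (pdx f p) (pdy f p) = -((u1 p * v2 p - u2 p * v1 p) • N p)) ∧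
    (∀ p, LinearMap.rank ((fderiv ℝ f p : (ℝ × ℝ) →ₗ[ℝ] M2)) = 2 ↔
      LinearIndependent ℝ ![Up p, Vp p]) := by
  -- invertibility of F p
  have hdet : ∀ p, IsUnit (F p).det := fun p => by
    rw [((Matrix.mem_specialUnitaryGroup_iff).1 (hFU p)).2]; exact isUnit_one
  have hFi : ∀ p, (F p)⁻¹ * F p = 1 := fun p => Matrix.nonsing_inv_mul _ (hdet p)
  have hFi' : ∀ p, F p * (F p)⁻¹ = 1 := fun p => Matrix.mul_nonsing_inv _ (hdet p)
  -- conjugation map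
  have hconj_mul : ∀ p (X Y : M2),
      (F p * X * (F p)⁻¹) * (F p * Y * (F p)⁻¹) = F p * (X * Y) * (F p)⁻¹ := fun p X Y => by
    calc (F p * X * (F p)⁻¹) * (F p * Y * (F p)⁻¹)
        = F p * X * ((F p)⁻¹ * F p) * Y * (F p)⁻¹ := by noncomm_ring
      _ = F p * (X * Y) * (F p)⁻¹ := by rw [hFi]; noncomm_ring
  have hconj_zero : ∀ p (X : M2), F p * X * (F p)⁻¹ = 0 → X = 0 := fun p X h => by
    have : (F p)⁻¹ * (F p * X * (F p)⁻¹) * F p = 0 := by rw [h]; simp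
    rwa [show (F p)⁻¹ * (F p * X * (F p)⁻¹) * F p = ((F p)⁻¹ * F p) * X * ((F p)⁻¹ * F p) by
      noncomm_ring, hFi p, one_mul, mul_one] at this
  have hbr : ∀ p, br (pdx f p) (pdy f p) = -((u1 p * v2 p - u2 p * v1 p) • N p) := by
    intro p
    rw [hfx, hfy, hN]
    simp only [br, mul_neg, neg_mul, sub_neg_eq_add]
    have : F p * Up p * (F p)⁻¹ * (F p * Vp p * (F p)⁻¹)
        - F p * Vp p * (F p)⁻¹ * (F p * Up p * (F p)⁻¹)
        = F p * (br (Up p) (Vp p)) * (F p)⁻¹ := by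
      rw [hconj_mul, hconj_mul]; simp [br, Matrix.mul_sub, Matrix.sub_mul]
    rw [show -(F p * Up p * (F p)⁻¹ * (F p * Vp p * (F p)⁻¹))
        + F p * Vp p * (F p)⁻¹ * (F p * Up p * (F p)⁻¹)
        = -(F p * Up p * (F p)⁻¹ * (F p * Vp p * (F p)⁻¹)
          - F p * Vp p * (F p)⁻¹ * (F p * Up p * (F p)⁻¹)) by abel, this,
      hUpdef, hVpdef, br_p]
    simp [mul_smul_comm, smul_mul_assoc]
  refine ⟨hbr, fun p => ?_⟩
  set L : (ℝ × ℝ) →ₗ[ℝ] M2 := (fderiv ℝ f p : (ℝ × ℝ) →ₗ[ℝ] M2) with hL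
  have hL10 : L (1, 0) = F p * Up p * (F p)⁻¹ := hfx p
  have hL01 : L (0, 1) = -(F p * Vp p * (F p)⁻¹) := hfy p
  have hLv : ∀ v : ℝ × ℝ, L v = F p * (v.1 • Up p - v.2 • Vp p) * (F p)⁻¹ := by
    intro v
    have : v = v.1 • ((1 : ℝ), (0 : ℝ)) + v.2 • ((0 : ℝ), (1 : ℝ)) := by
      ext <;> simp
    rw [show L v = L (v.1 • ((1:ℝ),(0:ℝ)) + v.2 • ((0:ℝ),(1:ℝ))) by rw [← this],
      map_add, L.map_smul, L.map_smul, hL10, hL01]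
    simp only [smul_neg, sub_eq_add_neg, Matrix.mul_add, Matrix.add_mul, Matrix.neg_mul,
      Matrix.mul_neg, mul_smul_comm, smul_mul_assoc]
  -- rank = 2 ↔ injective
  have hrank : LinearMap.rank L = 2 ↔ Function.Injective L := by
    have h1 : LinearMap.rank L = (Module.finrank ℝ (LinearMap.range L) : Cardinal) :=
      (Module.finrank_eq_rank ℝ _).symm
    have h2 : Module.finrank ℝ (LinearMap.range L) + Module.finrank ℝ (LinearMap.ker L)
        = Module.finrank ℝ (ℝ × ℝ) := LinearMap.finrank_range_add_finrank_ker L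
    have h3 : Module.finrank ℝ (ℝ × ℝ) = 2 := by simp
    rw [h1, show (2 : Cardinal) = ((2 : ℕ) : Cardinal) by norm_num, Nat.cast_inj,
      ← LinearMap.ker_eq_bot, ← Submodule.finrank_eq_zero (S := LinearMap.ker L)]
    omega
  rw [hrank, LinearIndependent.pair_iff]
  constructor
  · intro hinj s t hst
    have : L (s, -t) = 0 := by
      rw [hLv]; simp only [neg_smul, sub_neg_eq_add, hst]; simp
    have h0 : (s, -t) = ((0 : ℝ), (0 : ℝ)) := hinj (this.trans (map_zero L).symm)
    constructor
    · exact congrArg Prod.fst h0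
    · have := congrArg Prod.snd h0; simpa [neg_eq_zero] using this
  · intro hli
    rw [← LinearMap.ker_eq_bot, eq_bot_iff]
    intro v hv
    have hv0 : F p * (v.1 • Up p - v.2 • Vp p) * (F p)⁻¹ = 0 := by
      rw [← hLv]; exact hv
    have := hconj_zero p _ hv0
    have := hli v.1 (-v.2) (by rw [neg_smul, ← sub_eq_add_neg]; exact this)
    have hv1 : v.1 = 0 := this.1
    have hv2 : v.2 = 0 := by have := this.2; simpa [neg_eq_zero] using this
    simp [Submodule.mem_bot, Prod.ext_iff, hv1, hv2]
end
end

section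
/- Let F : ℝ² → SU(2) be smooth, and let u₀, a, b : ℝ² → ℝ be smooth functions such that F⁻¹ ∂_x F = u₀ e₃ + e₁ and F⁻¹ ∂_y F = −(a e₁ + b e₂). Then necessarily ∂_x b = −u₀ · a everywhere. Consequently, if b(x, 0) = 0 for all x ∈ ℝ and a(x₀, 0) ≠ 0, then u₀(x₀, 0) = 0; and if a(x, 0) ≠ 0 for all x, then the curve γ(x) := f(x, 0) of any C² map f : ℝ² → su(2) with ∂_x f = F e₁ F⁻¹ satisfies γ''(x) = 0 for all x, i.e. γ is a straight line segment. -/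
open Matrix

attribute [local instance] Matrix.normedAddCommGroup Matrix.normedSpace

noncomputable section

instance clmNACG : NormedAddCommGroup (ℝ × ℝ →L[ℝ] M2) := ContinuousLinearMap.toNormedAddCommGroup
instance clmNS : NormedSpace ℝ (ℝ × ℝ →L[ℝ] M2) := ContinuousLinearMap.toNormedSpace

namespace Stmt11Aux

def mulL : M2 →L[ℝ] M2 →L[ℝ] M2 :=
  LinearMap.toContinuousLinearMap <|
    (LinearMap.toContinuousLinearMap.toLinearMap).comp (LinearMap.mul ℝ M2)

@[simp] lemma mulL_apply (A B : M2) : mulL A B = A * B := rfl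

lemma mulL_bdd : IsBoundedBilinearMap ℝ fun p : M2 × M2 => p.1 * p.2 :=
  mulL.isBoundedBilinearMap

lemma fderiv_mul_apply {E : Type*} [NormedAddCommGroup E] [NormedSpace ℝ E]
    {g h : E → M2} {p : E} (hg : DifferentiableAt ℝ g p) (hh : DifferentiableAt ℝ h p)
    (v : E) :
    fderiv ℝ (fun q => g q * h q) p v = fderiv ℝ g p v * h p + g p * fderiv ℝ h p v := by
  have H : HasFDerivAt (fun q => g q * h q)
      ((mulL_bdd.deriv (g p, h p)).comp ((fderiv ℝ g p).prod (fderiv ℝ h p))) p :=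
    have H0 : HasFDerivAt (fun q : M2 × M2 => q.1 * q.2) (mulL_bdd.deriv (g p, h p)) (g p, h p) :=
      mulL_bdd.hasFDerivAt (g p, h p)
    by have := H0.comp p (HasFDerivAt.prodMk hg.hasFDerivAt hh.hasFDerivAt); exact this
  erw [H.fderiv]
  erw [ContinuousLinearMap.comp_apply, IsBoundedBilinearMap.deriv_apply]
  rw [add_comm]; rfl

lemma deriv_mul_apply {g h : ℝ → M2} {x : ℝ} (hg : DifferentiableAt ℝ g x)
    (hh : DifferentiableAt ℝ h x) :
    deriv (fun s => g s * h s) x = deriv g x * h x + g x * deriv h x := by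
  exact fderiv_mul_apply hg hh 1

end Stmt11Aux

open Stmt11Aux

/-- with `F⁻¹∂ₓF = u₀e₃ + e₁` and `F⁻¹∂_yF = −(a e₁ + b e₂)`, one has
`∂ₓ b = −u₀ a`; hence if `b(·,0) ≡ 0` and `a(x₀,0) ≠ 0` then `u₀(x₀,0) = 0`, and if
`b(·,0) ≡ 0` and `a(·,0)` never vanishes, then `γ(x) = f(x,0)` is a straight line
(`γ″ ≡ 0`) for any pseudospherical frontal `f` with `f_x = Ad_F e₁`. -/
theorem statement11 (F : ℝ × ℝ → M2) (hF : ContDiff ℝ (⊤ : ℕ∞) F)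
    (hFU : ∀ p, F p ∈ Matrix.specialUnitaryGroup (Fin 2) ℂ)
    (u0 a b : ℝ × ℝ → ℝ)
    (hu0 : ContDiff ℝ (⊤ : ℕ∞) u0) (ha : ContDiff ℝ (⊤ : ℕ∞) a) (hb : ContDiff ℝ (⊤ : ℕ∞) b)
    (hx : ∀ p, (F p)⁻¹ * pdx F p = u0 p • e3 + e1)
    (hy : ∀ p, (F p)⁻¹ * pdy F p = -(a p • e1 + b p • e2)) :
    (∀ p, fderiv ℝ b p (1, 0) = -(u0 p * a p)) ∧
    (∀ x0 : ℝ, (∀ x : ℝ, b (x, 0) = 0) → a (x0, 0) ≠ 0 → u0 (x0, 0) = 0) ∧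
    ((∀ x : ℝ, b (x, 0) = 0) → (∀ x : ℝ, a (x, 0) ≠ 0) →
      ∀ f : ℝ × ℝ → M2, ContDiff ℝ 2 f →
        (∀ p, pdx f p = F p * e1 * (F p)⁻¹) →
        ∀ x : ℝ, deriv (deriv (fun s => f (s, 0))) x = 0) := by
  have hdet : ∀ p, IsUnit (F p).det := by
    intro p
    rw [(Matrix.mem_specialUnitaryGroup_iff.mp (hFU p)).2]
    exact isUnit_one
  have hFd : Differentiable ℝ F := hF.differentiable (by simp)
  have hFd' : ContDiff ℝ (⊤ : ℕ∞) (fderiv ℝ F) := hF.fderiv_right (by simp)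
  have hx' : ∀ p, pdx F p = F p * (u0 p • e3 + e1) := by
    intro p
    conv_lhs => rw [← Matrix.mul_nonsing_inv_cancel_left (F p) (pdx F p) (hdet p), hx p]
  have hy' : ∀ p, pdy F p = F p * (-(a p • e1 + b p • e2)) := by
    intro p
    conv_lhs => rw [← Matrix.mul_nonsing_inv_cancel_left (F p) (pdy F p) (hdet p), hy p]
  have hUd : Differentiable ℝ (fun p => u0 p • e3 + e1) := fun p =>
    (((hu0.differentiable (by simp)) p).smul_const e3).add_const e1
  have hVd : Differentiable ℝ (fun p => -(a p • e1 + b p • e2)) := fun p =>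
    ((((ha.differentiable (by simp)) p).smul_const e1).add
      (((hb.differentiable (by simp)) p).smul_const e2)).neg
  have hUder : ∀ (p v : ℝ × ℝ), fderiv ℝ (fun p => u0 p • e3 + e1) p v
      = fderiv ℝ u0 p v • e3 := by
    intro p v
    have h1 : HasFDerivAt (fun p => u0 p • e3 + e1) ((fderiv ℝ u0 p).smulRight e3) p :=
      (((hu0.differentiable (by simp)) p).hasFDerivAt.smul_const e3).add_const e1
    rw [h1.fderiv]; rfl
  have hVder : ∀ (p v : ℝ × ℝ), fderiv ℝ (fun p => -(a p • e1 + b p • e2)) p v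
      = -(fderiv ℝ a p v • e1 + fderiv ℝ b p v • e2) := by
    intro p v
    have h1 : HasFDerivAt (fun p => -(a p • e1 + b p • e2))
        (-((fderiv ℝ a p).smulRight e1 + (fderiv ℝ b p).smulRight e2)) p :=
      ((((ha.differentiable (by simp)) p).hasFDerivAt.smul_const e1).add
        (((hb.differentiable (by simp)) p).hasFDerivAt.smul_const e2)).neg
    rw [h1.fderiv]; rfl
  have hsymm : ∀ p, pdy (pdx F) p = pdx (pdy F) p := by
    intro p
    have h2 : HasFDerivAt (fderiv ℝ F) (fderiv ℝ (fderiv ℝ F) p) p :=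
      ((hFd'.differentiable (by simp)) p).hasFDerivAt
    have hs := second_derivative_symmetric (fun y => (hFd y).hasFDerivAt) h2
    have e' : ∀ (w v : ℝ × ℝ), fderiv ℝ (fun q => fderiv ℝ F q w) p v
        = fderiv ℝ (fderiv ℝ F) p v w := by
      intro w v
      have h3 := (h2.clm_apply (hasFDerivAt_const w p)).fderiv
      have h4 := congrArg (fun L => L v) h3
      refine h4.trans ?_
      erw [ContinuousLinearMap.add_apply, ContinuousLinearMap.comp_apply,
        ContinuousLinearMap.zero_apply, map_zero, zero_add]
      rfl
    show fderiv ℝ (fun q => fderiv ℝ F q (1,0)) p (0,1)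
        = fderiv ℝ (fun q => fderiv ℝ F q (0,1)) p (1,0)
    rw [e', e']; exact hs _ _
  have key : ∀ p, (-(a p • e1 + b p • e2)) * (u0 p • e3 + e1) + fderiv ℝ u0 p (0,1) • e3
      = (u0 p • e3 + e1) * (-(a p • e1 + b p • e2))
        + -(fderiv ℝ a p (1,0) • e1 + fderiv ℝ b p (1,0) • e2) := by
    intro p
    have hL : pdy (pdx F) p = F p *
        ((-(a p • e1 + b p • e2)) * (u0 p • e3 + e1) + fderiv ℝ u0 p (0,1) • e3) := by
      have hpdx : pdx F = fun q => F q * (u0 q • e3 + e1) := funext hx'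
      rw [pdy, hpdx, fderiv_mul_apply (hFd p) (hUd p), hUder,
        show fderiv ℝ F p (0,1) = pdy F p from rfl, hy' p]
      conv_rhs => rw [mul_add, ← mul_assoc]
    have hR : pdx (pdy F) p = F p *
        ((u0 p • e3 + e1) * (-(a p • e1 + b p • e2))
          + -(fderiv ℝ a p (1,0) • e1 + fderiv ℝ b p (1,0) • e2)) := by
      have hpdy : pdy F = fun q => F q * (-(a q • e1 + b q • e2)) := funext hy'
      rw [pdx, hpdy, fderiv_mul_apply (hFd p) (hVd p), hVder,
        show fderiv ℝ F p (1,0) = pdx F p from rfl, hx' p]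
      conv_rhs => rw [mul_add, ← mul_assoc]
    have h4 := (hL.symm.trans ((hsymm p).trans hR))
    have := congrArg (fun M => (F p)⁻¹ * M) h4
    simpa only [Matrix.nonsing_inv_mul_cancel_left _ _ (hdet p)] using this
  have part1 : ∀ p, fderiv ℝ b p (1, 0) = -(u0 p * a p) := by
    intro p
    have h := key p
    have h01 := congrFun (congrFun h 0) 1
    simp only [e1, e2, e3, Matrix.add_apply, Matrix.neg_apply, Matrix.mul_apply,
      Fin.sum_univ_two, Matrix.smul_apply, Matrix.of_apply, Matrix.cons_val', Matrix.cons_val_zero,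
      Matrix.cons_val_one, Matrix.head_cons, Matrix.head_fin_const, Matrix.empty_val',
      Matrix.cons_val_fin_one, smul_eq_mul, Complex.real_smul] at h01
    have hre := congrArg Complex.re h01
    have him := congrArg Complex.im h01
    simp [Complex.add_re, Complex.mul_re, Complex.mul_im] at hre him
    nlinarith [hre, him]
  refine ⟨part1, ?_, ?_⟩
  · -- part 2
    intro x0 hb0 ha0
    have hcurve : HasDerivAt (fun s : ℝ => ((s, 0) : ℝ × ℝ)) (1, 0) x0 :=
      HasDerivAt.prodMk (hasDerivAt_id x0) (hasDerivAt_const x0 0)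
    have hcomp : HasDerivAt (fun s : ℝ => b (s, 0)) (fderiv ℝ b (x0, 0) (1, 0)) x0 :=
      ((hb.differentiable (by simp)) (x0, 0)).hasFDerivAt.comp_hasDerivAt x0 hcurve
    have h0 : (fun s : ℝ => b (s, 0)) = fun _ => (0 : ℝ) := funext hb0
    rw [h0] at hcomp
    have hz : fderiv ℝ b (x0, 0) (1, 0) = 0 := by
      have := hcomp.deriv
      simpa using this.symm
    have := part1 (x0, 0)
    rw [hz] at this
    rcases mul_eq_zero.mp (by linarith : u0 (x0, 0) * a (x0, 0) = 0) with h | h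
    · exact h
    · exact absurd h ha0
  · -- part 3
    intro hb0 ha0 f hf2 hfx x
    have hu00 : ∀ s : ℝ, u0 (s, 0) = 0 := by
      intro s
      have hcurve : HasDerivAt (fun t : ℝ => ((t, 0) : ℝ × ℝ)) (1, 0) s :=
        HasDerivAt.prodMk (hasDerivAt_id s) (hasDerivAt_const s 0)
      have hcomp : HasDerivAt (fun t : ℝ => b (t, 0)) (fderiv ℝ b (s, 0) (1, 0)) s :=
        ((hb.differentiable (by simp)) (s, 0)).hasFDerivAt.comp_hasDerivAt s hcurve
      have h0 : (fun t : ℝ => b (t, 0)) = fun _ => (0 : ℝ) := funext hb0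
      rw [h0] at hcomp
      have hz : fderiv ℝ b (s, 0) (1, 0) = 0 := by simpa using hcomp.deriv.symm
      have := part1 (s, 0)
      rw [hz] at this
      rcases mul_eq_zero.mp (by linarith : u0 (s, 0) * a (s, 0) = 0) with h | h
      · exact h
      · exact absurd h (ha0 s)
    have hfd : Differentiable ℝ f := hf2.differentiable (by norm_num)
    have hcurve : ∀ s : ℝ, HasDerivAt (fun t : ℝ => ((t, 0) : ℝ × ℝ)) (1, 0) s := fun s =>
      HasDerivAt.prodMk (hasDerivAt_id s) (hasDerivAt_const s 0)
    have hγ' : deriv (fun s : ℝ => f (s, 0)) = fun s => pdx f (s, 0) := by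
      funext s
      exact ((hfd (s, 0)).hasFDerivAt.comp_hasDerivAt s (hcurve s)).deriv
    rw [hγ']
    -- g s := pdx f (s,0), h s := F (s,0)
    have hpdxf : ContDiff ℝ 1 (pdx f) := by
      have h1 : ContDiff ℝ 1 (fderiv ℝ f) := hf2.fderiv_right (by norm_num)
      exact h1.clm_apply contDiff_const
    have hcurved : Differentiable ℝ (fun s : ℝ => ((s, 0) : ℝ × ℝ)) :=
      differentiable_id.prodMk (differentiable_const _)
    have hg : Differentiable ℝ (fun s : ℝ => pdx f (s, 0)) :=
      (hpdxf.differentiable (by norm_num)).comp hcurved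
    have hh : Differentiable ℝ (fun s : ℝ => F (s, 0)) := hFd.comp hcurved
    have ghid : ∀ s : ℝ, pdx f (s, 0) * F (s, 0) = F (s, 0) * e1 := by
      intro s
      rw [hfx (s, 0), Matrix.nonsing_inv_mul_cancel_right _ _ (hdet (s, 0))]
    have hh' : ∀ s : ℝ, deriv (fun t : ℝ => F (t, 0)) s = F (s, 0) * e1 := by
      intro s
      have h8 : deriv (fun t : ℝ => F (t, 0)) s = fderiv ℝ F (s, 0) (1, 0) :=
        ((hFd (s, 0)).hasFDerivAt.comp_hasDerivAt s (hcurve s)).deriv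
      rw [h8, show fderiv ℝ F (s, 0) (1, 0) = pdx F (s, 0) from rfl, hx' (s, 0), hu00 s]
      simp
    have hder : deriv (fun s : ℝ => pdx f (s, 0) * F (s, 0)) x
        = deriv (fun s : ℝ => F (s, 0) * e1) x := by
      rw [funext ghid]
    rw [deriv_mul_apply (hg x) (hh x), deriv_mul_apply (hh x) (differentiableAt_const e1),
      ] at hder
    erw [deriv_const] at hder
    simp only [mul_zero, add_zero] at hder
    rw [hh' x] at hder
    -- hder : deriv g x * F(x,0) + pdx f (x,0) * (F(x,0) * e1) = (F(x,0) * e1) * e1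
    have h5 : pdx f (x, 0) * (F (x, 0) * e1) = F (x, 0) * e1 * e1 := by
      rw [← mul_assoc, ghid x]
    rw [h5] at hder
    have h6 : deriv (fun s : ℝ => pdx f (s, 0)) x * F (x, 0) = 0 := by
      have := congrArg (fun M => M - F (x, 0) * e1 * e1) hder
      simpa [add_sub_cancel_right] using this
    have h7 := congrArg (fun M => M * (F (x, 0))⁻¹) h6
    simpa [Matrix.mul_nonsing_inv_cancel_right _ _ (hdet (x, 0))] using h7
end
end

section
/- There do not exist ε > 0, a function h : (0, ε) → ℝ that is differentiable with h(s) > 0 and h′(s) > 0 for all s ∈ (0, ε) and h(s) → 0 as s → 0⁺, and smooth functions p, q : [0, ε) → ℝ with (p(0), q(0)) ≠ (0, 0), such that p(s) = h(s)² · h′(s) and q(s) = h(s) · h′(s) for all s ∈ (0, ε). -/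
open Set Filter Topology


/-- there is no orientation-preserving reparametrization `h` on `(0, ε)`
tending to `0` at `0⁺` such that both `p = h² h′` and `q = h h′` extend smoothly to
`[0, ε)` with `(p(0), q(0)) ≠ (0, 0)`. -/
theorem statement18 :
    ¬ ∃ (ε : ℝ) (h p q : ℝ → ℝ),
      0 < ε ∧
      (∀ s ∈ Set.Ioo (0 : ℝ) ε, DifferentiableAt ℝ h s) ∧
      (∀ s ∈ Set.Ioo (0 : ℝ) ε, 0 < h s) ∧
      (∀ s ∈ Set.Ioo (0 : ℝ) ε, 0 < deriv h s) ∧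
      Filter.Tendsto h (nhdsWithin 0 (Set.Ioi 0)) (nhds 0) ∧
      ContDiffOn ℝ (⊤ : ℕ∞) p (Set.Ico 0 ε) ∧
      ContDiffOn ℝ (⊤ : ℕ∞) q (Set.Ico 0 ε) ∧
      (p 0, q 0) ≠ (0, 0) ∧
      (∀ s ∈ Set.Ioo (0 : ℝ) ε, p s = h s ^ 2 * deriv h s) ∧
      (∀ s ∈ Set.Ioo (0 : ℝ) ε, q s = h s * deriv h s) := by
  rintro ⟨ε, h, p, q, hε, hdiff, hpos, hderiv, hlim, hpC, hqC, hne, hpeq, hqeq⟩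
  have hle : 𝓝[Ioo (0:ℝ) ε] 0 ≤ 𝓝[>] (0:ℝ) := nhdsWithin_mono _ Ioo_subset_Ioi_self
  have hNe : (𝓝[Ioo (0:ℝ) ε] (0:ℝ)).NeBot := by
    rw [nhdsWithin_Ioo_eq_nhdsGT hε]; infer_instance
  have hIooIco : Ioo (0:ℝ) ε ⊆ Ico 0 ε := Ioo_subset_Ico_self
  have h0mem : (0:ℝ) ∈ Ico (0:ℝ) ε := ⟨le_refl _, hε⟩
  have hqc : Tendsto q (𝓝[Ioo (0:ℝ) ε] 0) (𝓝 (q 0)) :=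
    ((hqC.continuousOn 0 h0mem).mono hIooIco)
  -- p 0 = 0
  have hp0 : p 0 = 0 := by
    have h1 : Tendsto p (𝓝[Ioo (0:ℝ) ε] 0) (𝓝 (p 0)) :=
      (hpC.continuousOn 0 h0mem).mono hIooIco
    have h2 : Tendsto p (𝓝[Ioo (0:ℝ) ε] 0) (𝓝 0) := by
      have hh : Tendsto h (𝓝[Ioo (0:ℝ) ε] 0) (𝓝 0) := hlim.mono_left hle
      have h3 := hh.mul hqc
      rw [zero_mul] at h3
      refine h3.congr' ?_
      filter_upwards [self_mem_nhdsWithin] with s hs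
      rw [hpeq s hs, hqeq s hs]; ring
    exact tendsto_nhds_unique h1 h2
  -- q 0 > 0
  have hq0ne : q 0 ≠ 0 := fun hc => hne (by rw [hp0, hc])
  have hqpos : ∀ s ∈ Ioo (0:ℝ) ε, 0 < q s := fun s hs => by
    rw [hqeq s hs]; exact mul_pos (hpos s hs) (hderiv s hs)
  have hq0pos : 0 < q 0 := by
    rcases lt_or_eq_of_le (ge_of_tendsto hqc
      (by filter_upwards [self_mem_nhdsWithin] with s hs using (hqpos s hs).le)) with h1 | h1
    · exact h1
    · exact absurd h1.symm hq0ne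
  set c := q 0 with hc
  -- δ such that q > c/2 on (0, δ) ∩ Ioo 0 ε
  have E1 : ∀ᶠ s in 𝓝[Ioo (0:ℝ) ε] 0, c/2 < q s :=
    hqc.eventually (eventually_gt_nhds (by linarith))
  rw [eventually_iff, Metric.mem_nhdsWithin_iff] at E1
  obtain ⟨δ, hδpos, hδ⟩ := E1
  have hδq : ∀ x ∈ Ioo (0:ℝ) ε, x < δ → c/2 < q x := by
    intro x hx hxδ
    exact hδ ⟨by simp [abs_of_pos hx.1, hxδ], hx⟩
  -- derivative of p at 0 within Ico
  have hd := ((hpC.differentiableOn (by simp)) 0 h0mem).hasDerivWithinAt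
  rw [hasDerivWithinAt_iff_tendsto_slope, Ico_diff_left] at hd
  set d := derivWithin p (Ico (0:ℝ) ε) 0 with hdd
  set K := max (d + 1) 1 with hK
  have hKpos : 0 < K := lt_of_lt_of_le one_pos (le_max_right _ _)
  have hcs : 0 < Real.sqrt c := Real.sqrt_pos.mpr hq0pos
  set T := c * Real.sqrt c / (2 * K) with hT
  have hTpos : 0 < T := by positivity
  -- gather eventual conditions and extract s
  have E2 : ∀ᶠ s in 𝓝[Ioo (0:ℝ) ε] 0, slope p 0 s < d + 1 :=
    hd.eventually (eventually_lt_nhds (lt_add_one d))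
  have E3 : ∀ᶠ s in 𝓝[Ioo (0:ℝ) ε] 0, s < δ :=
    eventually_nhdsWithin_of_eventually_nhds (eventually_lt_nhds hδpos)
  have E4 : ∀ᶠ s in 𝓝[Ioo (0:ℝ) ε] 0, s < T ^ 2 :=
    eventually_nhdsWithin_of_eventually_nhds (eventually_lt_nhds (by positivity))
  obtain ⟨s, ⟨⟨hslope, hsδ⟩, hsT⟩, hs0, hsε⟩ :=
    (((E2.and E3).and E4).and self_mem_nhdsWithin).exists
  -- key: c * s ≤ h s ^ 2
  have key : c * s ≤ h s ^ 2 := by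
    have hmono : ∀ a ∈ Ioo (0:ℝ) s, c * (s - a) ≤ h s ^ 2 := by
      intro a ha
      obtain ⟨ha0, has⟩ := ha
      have hsub : Icc a s ⊆ Ioo 0 ε := fun x hx =>
        ⟨lt_of_lt_of_le ha0 hx.1, lt_of_le_of_lt hx.2 hsε⟩
      have hcont : ContinuousOn (fun x => h x ^ 2) (Icc a s) := fun x hx =>
        ((hdiff x (hsub hx)).continuousAt.continuousWithinAt).pow 2
      have hder : ∀ x ∈ Ioo a s, HasDerivAt (fun x => h x ^ 2) (2 * h x * deriv h x) x := by
        intro x hx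
        have hx' : x ∈ Ioo (0:ℝ) ε := ⟨ha0.trans hx.1, hx.2.trans hsε⟩
        have := ((hdiff x hx').hasDerivAt).pow 2
        simpa [mul_comm, mul_assoc] using (show HasDerivAt (fun x => h x ^ 2) _ x from this)
      obtain ⟨ξ, hξ, hξeq⟩ := exists_hasDerivAt_eq_slope (fun x => h x ^ 2) _ has hcont hder
      have hξ' : ξ ∈ Ioo (0:ℝ) ε := ⟨ha0.trans hξ.1, hξ.2.trans hsε⟩
      have hqξ : c / 2 < q ξ := hδq ξ hξ' (hξ.2.trans hsδ)
      rw [hqeq ξ hξ'] at hqξ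
      have hsa : (0:ℝ) < s - a := by linarith
      have heq : h s ^ 2 - h a ^ 2 = 2 * h ξ * deriv h ξ * (s - a) := by
        field_simp at hξeq; linarith [hξeq]
      nlinarith [sq_nonneg (h a)]
    have hNe2 : (𝓝[Ioo (0:ℝ) s] (0:ℝ)).NeBot := by
      rw [nhdsWithin_Ioo_eq_nhdsGT hs0]; infer_instance
    have hlim2 : Tendsto (fun a => c * (s - a)) (𝓝[Ioo (0:ℝ) s] 0) (𝓝 (c * s)) := by
      have : Tendsto (fun a : ℝ => c * (s - a)) (𝓝 0) (𝓝 (c * (s - 0))) := by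
        exact (tendsto_const_nhds.mul (tendsto_const_nhds.sub tendsto_id))
      simpa using this.mono_left nhdsWithin_le_nhds
    exact le_of_tendsto hlim2
      (by filter_upwards [self_mem_nhdsWithin] with a ha using hmono a ha)
  -- lower bound on slope
  have hhs : Real.sqrt (c * s) ≤ h s := by
    have := Real.sqrt_le_sqrt key
    rwa [Real.sqrt_sq (hpos s ⟨hs0, hsε⟩).le] at this
  have hps : Real.sqrt (c * s) * (c / 2) ≤ p s := by
    have hqs : c / 2 ≤ q s := (hδq s ⟨hs0, hsε⟩ hsδ).le
    have : p s = h s * q s := by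
      rw [hpeq s ⟨hs0, hsε⟩, hqeq s ⟨hs0, hsε⟩]; ring
    rw [this]
    exact mul_le_mul hhs hqs (by positivity) (hpos s ⟨hs0, hsε⟩).le
  have hr : Real.sqrt s < T := by
    have := Real.sqrt_lt_sqrt hs0.le hsT
    rwa [Real.sqrt_sq hTpos.le] at this
  have hrpos : 0 < Real.sqrt s := Real.sqrt_pos.mpr hs0
  have hslope_eq : slope p 0 s = p s / s := by
    simp [slope_def_field, hp0]
  have hbig : K < slope p 0 s := by
    rw [hslope_eq]
    have h1 : Real.sqrt (c * s) = Real.sqrt c * Real.sqrt s := Real.sqrt_mul hq0pos.le s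
    have h2 : s = Real.sqrt s * Real.sqrt s := (Real.mul_self_sqrt hs0.le).symm
    have hKT : K * T = c * Real.sqrt c / 2 := by rw [hT]; field_simp
    have h5 : K * Real.sqrt s < c * Real.sqrt c / 2 := by
      have := mul_lt_mul_of_pos_left hr hKpos; rwa [hKT] at this
    have h3 : K < Real.sqrt (c * s) * (c / 2) / s := by
      rw [h1, lt_div_iff₀ hs0]
      nlinarith [mul_lt_mul_of_pos_right h5 hrpos, h2.symm]
    exact lt_of_lt_of_le h3 (by gcongr)
  have : slope p 0 s < K := lt_of_lt_of_le hslope (le_max_left _ _)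
  linarith
end
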